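/- arXiv:1710.05559 — 2 statements merged into one kernel-verified Lean document; each statement's English description precedes it below -/
import Mathlib

section
/- Let d ≥ 1, γ > 0, κ > 0, let M ≥ 2d/κ, and let h : ℝ^d → ℝ^d be a measurable map such that ⟨x, h(x)⟩ − (γ/2)‖h(x)‖² ≥ κ‖x‖ for all x with ‖x‖ ≥ M. Set æ = κM/(4(1 + M²)^{1/2}) and V_æ(x) = exp(æ(1 + ‖x‖²)^{1/2}). Then for all x ∈ ℝ^d with ‖x‖ ≥ M, (2π)^{-d/2} ∫_{ℝ^d} V_æ(x − γh(x) + √(2γ)z) e^{-‖z‖²/2} dz ≤ e^{-æ²γ} V_æ(x). -/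
/-!
Majorise `√(1 + ‖u‖²)` by its tangent line `(1 + ‖u‖² + s²) / (2s)` at `s = √(1 + ‖x‖²)`. The
integrand becomes the exponential of a quadratic in `z`, whose Gaussian integral is explicit. The
drift condition gives `‖x - γ h(x)‖² ≤ ‖x‖² - 2γκ‖x‖`, and the choice of `æ` gives
`4æ√(1 + ‖x‖²) ≤ κ‖x‖` (as `t ↦ t / √(1 + t²)` increases); together with `log t ≤ t - 1` for the
dimensional factor, they bound the resulting exponent by `æ√(1 + ‖x‖²) - æ²γ`.
-/

open RealInnerProductSpace MeasureTheory

section InnerProductSpace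

variable {V : Type*} [NormedAddCommGroup V] [InnerProductSpace ℝ V]

lemma norm_sub_smul_sq_le {x v : V} {γ t : ℝ} (hγ : 0 ≤ γ)
    (h : t ≤ ⟪x, v⟫ - γ / 2 * ‖v‖ ^ 2) : ‖x - γ • v‖ ^ 2 ≤ ‖x‖ ^ 2 - 2 * γ * t := by
  rw [norm_sub_sq_real, real_inner_smul_right, norm_smul, mul_pow, Real.norm_eq_abs, sq_abs]
  nlinarith

lemma exp_sqrt_one_add_sq_norm_mul_exp_le {a s : ℝ} (ha : 0 ≤ a) (hs : 0 < s) (c : ℝ)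
    (y z : V) :
    Real.exp (a * √(1 + ‖y + c • z‖ ^ 2)) * Real.exp (-‖z‖ ^ 2 / 2) ≤
      Real.exp (a * (1 + ‖y‖ ^ 2 + s ^ 2) / (2 * s)) *
        Real.exp (-((s - a * c ^ 2) / (2 * s)) * ‖z‖ ^ 2 + ⟪(a * c / s) • y, z⟫) := by
  -- tangent line of the concave `√` at `s ^ 2`
  have hsqrt (A : ℝ) (hA : 0 ≤ A) : √A ≤ (A + s ^ 2) / (2 * s) := by
    rw [le_div_iff₀ (by positivity)]
    nlinarith [two_mul_le_add_sq s √A, Real.sq_sqrt hA]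
  have hnorm : ‖y + c • z‖ ^ 2 = ‖y‖ ^ 2 + 2 * c * ⟪y, z⟫ + c ^ 2 * ‖z‖ ^ 2 := by
    rw [norm_add_sq_real, real_inner_smul_right, norm_smul, mul_pow, Real.norm_eq_abs, sq_abs]
    ring
  rw [← Real.exp_add, ← Real.exp_add, Real.exp_le_exp, real_inner_smul_left]
  calc a * √(1 + ‖y + c • z‖ ^ 2) + -‖z‖ ^ 2 / 2
      ≤ a * ((1 + ‖y + c • z‖ ^ 2 + s ^ 2) / (2 * s)) + -‖z‖ ^ 2 / 2 := by
        gcongr; exact hsqrt _ (by positivity)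
    _ = _ := by rw [hnorm]; field_simp; ring

-- in the shape of `GaussianFourier.integral_cexp_neg_mul_sq_norm_add` with `c = 1`
lemma ofReal_neg_mul_sq_norm_add_inner (b : ℝ) (w v : V) :
    ((-b * ‖v‖ ^ 2 + ⟪w, v⟫ : ℝ) : ℂ) = -(b : ℂ) * (‖v‖ : ℂ) ^ 2 + 1 * (⟪w, v⟫ : ℂ) := by
  push_cast; ring

variable [FiniteDimensional ℝ V] [MeasurableSpace V] [BorelSpace V]

lemma integrable_exp_neg_mul_sq_norm_add_inner {b : ℝ} (hb : 0 < b) (w : V) :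
    Integrable (fun v : V ↦ Real.exp (-b * ‖v‖ ^ 2 + ⟪w, v⟫)) := by
  refine (GaussianFourier.integrable_cexp_neg_mul_sq_norm_add (b := b) (by simpa using hb) 1
    w).norm.congr (.of_forall fun v ↦ ?_)
  simp only [← ofReal_neg_mul_sq_norm_add_inner, Complex.norm_exp_ofReal]

lemma integral_exp_neg_mul_sq_norm_add_inner {b : ℝ} (hb : 0 < b) (w : V) :
    ∫ v : V, Real.exp (-b * ‖v‖ ^ 2 + ⟪w, v⟫) =
      (Real.pi / b) ^ (Module.finrank ℝ V / 2 : ℝ) * Real.exp (‖w‖ ^ 2 / (4 * b)) := by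
  have h := GaussianFourier.integral_cexp_neg_mul_sq_norm_add (b := b) (by simpa using hb) 1 w
  simp_rw [← ofReal_neg_mul_sq_norm_add_inner, ← Complex.ofReal_exp, integral_complex_ofReal] at h
  rw [← Complex.ofReal_inj, h, Complex.ofReal_mul, Complex.ofReal_cpow (by positivity),
    Complex.ofReal_exp]
  push_cast
  ring_nf

lemma integral_exp_sqrt_one_add_sq_norm_gaussian_le {a s : ℝ} (ha : 0 ≤ a) (c : ℝ)
    (hs : a * c ^ 2 < s) (y : V) :
    (2 * Real.pi) ^ (-(Module.finrank ℝ V : ℝ) / 2) *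
        ∫ z : V, Real.exp (a * √(1 + ‖y + c • z‖ ^ 2)) * Real.exp (-‖z‖ ^ 2 / 2) ≤
      (s / (s - a * c ^ 2)) ^ (Module.finrank ℝ V / 2 : ℝ) *
        Real.exp (a * (1 + ‖y‖ ^ 2 + s ^ 2) / (2 * s) +
          a ^ 2 * c ^ 2 * ‖y‖ ^ 2 / (2 * s * (s - a * c ^ 2))) := by
  have hs0 : 0 < s := lt_of_le_of_lt (by positivity) hs
  have he : 0 < s - a * c ^ 2 := sub_pos.2 hs
  have hb : 0 < (s - a * c ^ 2) / (2 * s) := by positivity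
  have hpow : (2 * Real.pi) ^ (-(Module.finrank ℝ V : ℝ) / 2) *
      (Real.pi / ((s - a * c ^ 2) / (2 * s))) ^ (Module.finrank ℝ V / 2 : ℝ) =
        (s / (s - a * c ^ 2)) ^ (Module.finrank ℝ V / 2 : ℝ) := by
    rw [neg_div, Real.rpow_neg (by positivity), inv_mul_eq_div, ← Real.div_rpow (by positivity)
      (by positivity)]
    congr 1
    field_simp
  have hshift : ‖(a * c / s) • y‖ ^ 2 / (4 * ((s - a * c ^ 2) / (2 * s))) =
      a ^ 2 * c ^ 2 * ‖y‖ ^ 2 / (2 * s * (s - a * c ^ 2)) := by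
    rw [norm_smul, mul_pow, Real.norm_eq_abs, sq_abs]
    field_simp
    ring
  calc _ ≤ (2 * Real.pi) ^ (-(Module.finrank ℝ V : ℝ) / 2) *
        ∫ z : V, Real.exp (a * (1 + ‖y‖ ^ 2 + s ^ 2) / (2 * s)) *
          Real.exp (-((s - a * c ^ 2) / (2 * s)) * ‖z‖ ^ 2 + ⟪(a * c / s) • y, z⟫) := by
        refine mul_le_mul_of_nonneg_left ?_ (by positivity)
        exact integral_mono_of_nonneg (.of_forall fun z ↦ by positivity)
          ((integrable_exp_neg_mul_sq_norm_add_inner hb _).const_mul _)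
          (.of_forall fun z ↦ exp_sqrt_one_add_sq_norm_mul_exp_le ha hs0 c y z)
    _ = _ := by
        rw [integral_const_mul, integral_exp_neg_mul_sq_norm_add_inner hb, hshift, Real.exp_add]
        linear_combination (Real.exp (a * (1 + ‖y‖ ^ 2 + s ^ 2) / (2 * s)) *
          Real.exp (a ^ 2 * c ^ 2 * ‖y‖ ^ 2 / (2 * s * (s - a * c ^ 2)))) * hpow

end InnerProductSpace

lemma mul_sqrt_one_add_sq_le_mul_sqrt_one_add_sq {m r : ℝ} (hm : 0 ≤ m) (hmr : m ≤ r) :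
    m * √(1 + r ^ 2) ≤ r * √(1 + m ^ 2) := by
  refine (pow_le_pow_iff_left₀ (mul_nonneg hm (Real.sqrt_nonneg _))
    (mul_nonneg (hm.trans hmr) (Real.sqrt_nonneg _)) two_ne_zero).1 ?_
  rw [mul_pow, mul_pow, Real.sq_sqrt (by positivity), Real.sq_sqrt (by positivity)]
  nlinarith [pow_le_pow_left₀ hm hmr 2]

lemma rpow_div_mul_exp_le_exp_neg_sq_mul_mul_exp {n a γ κ r s Y : ℝ} (hn : 0 ≤ n)
    (ha : 0 ≤ a) (hγ : 0 ≤ γ) (hs : s ^ 2 = 1 + r ^ 2) (hγs : a * (2 * γ) < s)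
    (hY : Y ≤ r ^ 2 - 2 * γ * (κ * r)) (hκr : n + 2 * a * s ≤ κ * r) :
    (s / (s - a * (2 * γ))) ^ (n / 2) *
        Real.exp (a * (1 + Y + s ^ 2) / (2 * s) +
          a ^ 2 * (2 * γ) * Y / (2 * s * (s - a * (2 * γ)))) ≤
      Real.exp (-a ^ 2 * γ) * Real.exp (a * s) := by
  have hs0 : 0 < s := lt_of_le_of_lt (by positivity) hγs
  set e := s - a * (2 * γ) with he_def
  have he : 0 < e := sub_pos.2 hγs
  -- `log t ≤ t - 1` at `t = s / e`
  have hrpow : (s / e) ^ (n / 2) ≤ Real.exp (a * (2 * γ) / e * (n / 2)) := by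
    rw [Real.exp_mul]
    gcongr
    have := Real.add_one_le_exp (a * (2 * γ) / e)
    rwa [div_add_one he.ne', he_def, add_sub_cancel] at this
  have hD : 0 ≤ 2 * s * e * (s - a * γ) - 2 * γ * n * s - e * (1 + s ^ 2) - s * Y := by
    nlinarith [mul_le_mul_of_nonneg_left hY hs0.le,
      mul_nonneg hγ (mul_nonneg hs0.le (sub_nonneg.2 hκr)),
      mul_nonneg (mul_nonneg ha hγ) (mul_nonneg (mul_nonneg ha hγ) hs0.le)]
  calc _ ≤ Real.exp (a * (2 * γ) / e * (n / 2)) *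
        Real.exp (a * (1 + Y + s ^ 2) / (2 * s) + a ^ 2 * (2 * γ) * Y / (2 * s * e)) := by
        gcongr
    _ = Real.exp (-a ^ 2 * γ + a * s -
          a * (2 * s * e * (s - a * γ) - 2 * γ * n * s - e * (1 + s ^ 2) - s * Y) /
            (2 * s * e)) := by
        rw [← Real.exp_add]
        congr 1
        field_simp
        rw [he_def]
        ring
    _ ≤ Real.exp (-a ^ 2 * γ + a * s) := by
        gcongr
        exact sub_le_self _ (by positivity)
    _ = _ := Real.exp_add _ _

theorem euler_kernel_lyapunov_contraction_outside_general
    (d : ℕ) (γ κ : ℝ) (hγ : 0 < γ) (hκ : 0 < κ)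
    (M : ℝ) (hM : 2 * d / κ ≤ M)
    (h : EuclideanSpace ℝ (Fin d) → EuclideanSpace ℝ (Fin d))
    (hdrift : ∀ x : EuclideanSpace ℝ (Fin d), M ≤ ‖x‖ →
      κ * ‖x‖ ≤ ⟪x, h x⟫ - γ / 2 * ‖h x‖ ^ 2)
    (ae : ℝ) (hae : ae = κ * M / (4 * Real.sqrt (1 + M ^ 2))) :
    ∀ x : EuclideanSpace ℝ (Fin d), M ≤ ‖x‖ →
      (2 * Real.pi) ^ (-(d : ℝ) / 2) *
          ∫ z : EuclideanSpace ℝ (Fin d),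
            Real.exp (ae * Real.sqrt (1 + ‖x - γ • h x + Real.sqrt (2 * γ) • z‖ ^ 2)) *
              Real.exp (-‖z‖ ^ 2 / 2)
        ≤ Real.exp (-ae ^ 2 * γ) * Real.exp (ae * Real.sqrt (1 + ‖x‖ ^ 2)) := by
  intro x hx
  have hM0 : 0 ≤ M := (by positivity : 0 ≤ 2 * (d : ℝ) / κ).trans hM
  have hs : √(1 + ‖x‖ ^ 2) ^ 2 = 1 + ‖x‖ ^ 2 := Real.sq_sqrt (by positivity)
  have hc : √(2 * γ) ^ 2 = 2 * γ := Real.sq_sqrt (by positivity)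
  have hy := norm_sub_smul_sq_le hγ.le (hdrift x hx)
  have ha : 0 ≤ ae := by rw [hae]; positivity
  have has : 4 * ae * √(1 + ‖x‖ ^ 2) ≤ κ * ‖x‖ := by
    have hQ : 0 < √(1 + M ^ 2) := by positivity
    calc 4 * ae * √(1 + ‖x‖ ^ 2) = κ * (M * √(1 + ‖x‖ ^ 2)) / √(1 + M ^ 2) := by
          rw [hae]; field_simp
      _ ≤ κ * (‖x‖ * √(1 + M ^ 2)) / √(1 + M ^ 2) := by
          gcongr κ * ?_ / _
          exact mul_sqrt_one_add_sq_le_mul_sqrt_one_add_sq hM0 hx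
      _ = κ * ‖x‖ := by field_simp
  have hdx : 2 * d ≤ κ * ‖x‖ := by
    rw [div_le_iff₀ hκ] at hM; nlinarith
  -- `0 ≤ ‖x - γ • h x‖²` and `hy` give `2γκ‖x‖ ≤ ‖x‖²`
  have hγs : ae * (2 * γ) < √(1 + ‖x‖ ^ 2) := by
    nlinarith [sq_nonneg ‖x - γ • h x‖, Real.sqrt_nonneg (1 + ‖x‖ ^ 2)]
  have hgauss := integral_exp_sqrt_one_add_sq_norm_gaussian_le ha (√(2 * γ)) (by rwa [hc])
    (x - γ • h x)
  rw [finrank_euclideanSpace_fin, hc] at hgauss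
  exact hgauss.trans (rpow_div_mul_exp_le_exp_neg_sq_mul_mul_exp (Nat.cast_nonneg d) ha hγ.le hs
    hγs hy (by linarith))

/-- Outside the ball of radius M, the Euler kernel contracts the
Lyapunov function V_ae(x) = exp(ae(1 + ‖x‖²)^{1/2}) with ae = κM/(4(1 + M²)^{1/2}). -/
theorem euler_kernel_lyapunov_contraction_outside
    (d : ℕ) (hd : 1 ≤ d) (γ κ : ℝ) (hγ : 0 < γ) (hκ : 0 < κ)
    (M : ℝ) (hM : 2 * d / κ ≤ M)
    (h : EuclideanSpace ℝ (Fin d) → EuclideanSpace ℝ (Fin d))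
    (hmeas : Measurable h)
    (hdrift : ∀ x : EuclideanSpace ℝ (Fin d), M ≤ ‖x‖ →
      κ * ‖x‖ ≤ ⟪x, h x⟫ - γ / 2 * ‖h x‖ ^ 2)
    (ae : ℝ) (hae : ae = κ * M / (4 * Real.sqrt (1 + M ^ 2))) :
    ∀ x : EuclideanSpace ℝ (Fin d), M ≤ ‖x‖ →
      (2 * Real.pi) ^ (-(d : ℝ) / 2) *
          ∫ z : EuclideanSpace ℝ (Fin d),
            Real.exp (ae * Real.sqrt (1 + ‖x - γ • h x + Real.sqrt (2 * γ) • z‖ ^ 2)) *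
              Real.exp (-‖z‖ ^ 2 / 2)
        ≤ Real.exp (-ae ^ 2 * γ) * Real.exp (ae * Real.sqrt (1 + ‖x‖ ^ 2)) :=
  euler_kernel_lyapunov_contraction_outside_general d γ κ hγ hκ M hM h hdrift ae hae
end

section
/- Let d ≥ 1, γ > 0, a > 0, M ≥ 0, K ≥ 0, and let h : ℝ^d → ℝ^d be a measurable map with ‖h(x)‖ ≤ K for all x with ‖x‖ ≤ M. Then for all x ∈ ℝ^d with ‖x‖ ≤ M, (2π)^{-d/2} ∫_{ℝ^d} V_a(x − γh(x) + √(2γ)z) e^{-‖z‖²/2} dz ≤ e^{γc} V_a(x), where V_a(x) = exp(a(1 + ‖x‖²)^{1/2}) and c = a² + a(MK + γK²/2 + d). -/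
/-!
Write `y = x - γ h(x)` and `S = √(1 + ‖y‖²)`. By AM–GM, `a √u ≤ a u / (2c) + a c / 2` for every
`c > 0`; with `u = 1 + ‖y + √(2γ) z‖²` this dominates the integrand by a Gaussian
`exp (-α ‖z‖² + ⟪w, z⟫)`, whose integral is explicit. The choice `c = S + 2γa` gives
`α = S / (2c)`, so the normalised volume factor is `(1 + 2γa/S)^{d/2} ≤ e^{γad}` and the exponent
collapses to `aS + γa² - γa²/(Sc) ≤ aS + γa²`. This yields `R_γ V_a(x) ≤ e^{γ(a² + ad)} V_a(y)`,
and since `‖y - x‖ ≤ γK`, `√(1 + ‖y‖²) ≤ √(1 + ‖x‖²) + ‖x‖ γK + (γK)²/2`.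
-/

open MeasureTheory Real Module
open scoped RealInnerProductSpace

lemma one_add_rpow_le_exp_mul {x r : ℝ} (hx : 0 ≤ x) (hr : 0 ≤ r) :
    (1 + x) ^ r ≤ rexp (x * r) := by
  rw [exp_mul]
  exact rpow_le_rpow (by linarith) (by linarith [add_one_le_exp x]) hr

lemma mul_sqrt_le_add {a c u : ℝ} (ha : 0 ≤ a) (hc : 0 < c) (hu : 0 ≤ u) :
    a * √u ≤ a / (2 * c) * u + a * c / 2 := by
  have hamgm : 2 * c * √u ≤ c ^ 2 + u := by
    simpa [sq_sqrt hu] using two_mul_le_add_sq c √u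
  calc a * √u = a / (2 * c) * (2 * c * √u) := by field_simp
    _ ≤ a / (2 * c) * (c ^ 2 + u) := by gcongr
    _ = a / (2 * c) * u + a * c / 2 := by field_simp; ring

section Gaussian

variable {V : Type*} [NormedAddCommGroup V] [InnerProductSpace ℝ V]

lemma neg_mul_sq_norm_add_inner_eq {α : ℝ} (hα : α ≠ 0) (w z : V) :
    -α * ‖z‖ ^ 2 + ⟪w, z⟫ = ‖w‖ ^ 2 / (4 * α) + -α * ‖z - (2 * α)⁻¹ • w‖ ^ 2 := by
  rw [norm_sub_sq_real, real_inner_smul_right, real_inner_comm, norm_smul, mul_pow,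
    Real.norm_eq_abs, sq_abs]
  field_simp
  ring

lemma mul_sqrt_one_add_sq_norm_add_smul_le {γ a c : ℝ} (hγ : 0 ≤ γ) (ha : 0 ≤ a) (hc : 0 < c)
    (y z : V) :
    a * √(1 + ‖y + √(2 * γ) • z‖ ^ 2) + -‖z‖ ^ 2 / 2 ≤
      a / (2 * c) * (1 + ‖y‖ ^ 2) + a * c / 2 +
        (-(1 / 2 - γ * a / c) * ‖z‖ ^ 2 + ⟪(a * √(2 * γ) / c) • y, z⟫) := by
  have hb : √(2 * γ) ^ 2 = 2 * γ := sq_sqrt (by positivity)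
  have hexpand : ‖y + √(2 * γ) • z‖ ^ 2 = ‖y‖ ^ 2 + 2 * √(2 * γ) * ⟪y, z⟫ + 2 * γ * ‖z‖ ^ 2 := by
    rw [norm_add_sq_real, real_inner_smul_right, norm_smul, mul_pow, Real.norm_eq_abs, sq_abs, hb]
    ring
  calc a * √(1 + ‖y + √(2 * γ) • z‖ ^ 2) + -‖z‖ ^ 2 / 2
      ≤ a / (2 * c) * (1 + ‖y + √(2 * γ) • z‖ ^ 2) + a * c / 2 + -‖z‖ ^ 2 / 2 := by
        gcongr; exact mul_sqrt_le_add ha hc (by positivity)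
    _ = _ := by rw [hexpand, real_inner_smul_left]; field_simp; ring

variable [FiniteDimensional ℝ V] [MeasurableSpace V] [BorelSpace V]

lemma integrable_rexp_neg_mul_sq_norm_add_inner {α : ℝ} (hα : 0 < α) (w : V) :
    Integrable (fun z : V ↦ rexp (-α * ‖z‖ ^ 2 + ⟪w, z⟫)) := by
  have hgauss : Integrable (fun z : V ↦ rexp (-α * ‖z‖ ^ 2)) :=
    Integrable.of_integral_ne_zero <| by
      rw [GaussianFourier.integral_rexp_neg_mul_sq_norm hα]; positivity
  simp_rw [neg_mul_sq_norm_add_inner_eq hα.ne', exp_add]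
  exact (hgauss.comp_sub_right _).const_mul _

lemma integral_rexp_neg_mul_sq_norm_add_inner {α : ℝ} (hα : 0 < α) (w : V) :
    ∫ z : V, rexp (-α * ‖z‖ ^ 2 + ⟪w, z⟫) =
      (π / α) ^ (finrank ℝ V / 2 : ℝ) * rexp (‖w‖ ^ 2 / (4 * α)) := by
  simp_rw [neg_mul_sq_norm_add_inner_eq hα.ne', exp_add, integral_const_mul,
    integral_sub_right_eq_self (fun z : V ↦ rexp (-α * ‖z‖ ^ 2)),
    GaussianFourier.integral_rexp_neg_mul_sq_norm hα, mul_comm]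

lemma integral_rexp_mul_sqrt_mul_gaussian_le {γ a c : ℝ} (hγ : 0 ≤ γ) (ha : 0 ≤ a) (hc : 0 < c)
    (hα : 0 < 1 / 2 - γ * a / c) (y : V) :
    ∫ z : V, rexp (a * √(1 + ‖y + √(2 * γ) • z‖ ^ 2)) * rexp (-‖z‖ ^ 2 / 2) ≤
      rexp (a / (2 * c) * (1 + ‖y‖ ^ 2) + a * c / 2) *
        ((π / (1 / 2 - γ * a / c)) ^ (finrank ℝ V / 2 : ℝ) *
          rexp (‖(a * √(2 * γ) / c) • y‖ ^ 2 / (4 * (1 / 2 - γ * a / c)))) := by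
  rw [← integral_rexp_neg_mul_sq_norm_add_inner hα, ← integral_const_mul]
  refine integral_mono_of_nonneg (ae_of_all _ fun z ↦ by positivity)
    ((integrable_rexp_neg_mul_sq_norm_add_inner hα _).const_mul _) (ae_of_all _ fun z ↦ ?_)
  dsimp only
  rw [← exp_add, ← exp_add]
  exact exp_le_exp.mpr (mul_sqrt_one_add_sq_norm_add_smul_le hγ ha hc y z)

theorem gaussian_smoothing_exp_sqrt_le {γ a : ℝ} (hγ : 0 ≤ γ) (ha : 0 ≤ a) (y : V) :
    (2 * π) ^ (-(finrank ℝ V : ℝ) / 2) *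
        ∫ z : V, rexp (a * √(1 + ‖y + √(2 * γ) • z‖ ^ 2)) * rexp (-‖z‖ ^ 2 / 2)
      ≤ rexp (γ * (a ^ 2 + a * finrank ℝ V)) * rexp (a * √(1 + ‖y‖ ^ 2)) := by
  set S := √(1 + ‖y‖ ^ 2)
  have hS2 : S ^ 2 = 1 + ‖y‖ ^ 2 := sq_sqrt (by positivity)
  have hS1 : 1 ≤ S := one_le_sqrt.mpr (le_add_of_nonneg_right (by positivity))
  set c := S + 2 * γ * a with hc_def
  have hc : 0 < c := by positivity
  set α := S / (2 * c) with hα_def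
  have hα : 0 < α := by positivity
  have hcoef : 1 / 2 - γ * a / c = α := by rw [hα_def, hc_def]; field_simp; ring
  set w := (a * √(2 * γ) / c) • y
  set C := a / (2 * c) * (1 + ‖y‖ ^ 2) + a * c / 2 with hC_def
  set n : ℝ := (finrank ℝ V : ℝ)
  have hintegral := integral_rexp_mul_sqrt_mul_gaussian_le hγ ha hc (hcoef ▸ hα) y
  rw [hcoef] at hintegral
  have hnormalize : (2 * π) ^ (-n / 2) * (π / α) ^ (n / 2) = (1 + 2 * γ * a / S) ^ (n / 2) := by
    rw [neg_div, rpow_neg (by positivity), inv_mul_eq_div,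
      ← div_rpow (by positivity) (by positivity)]
    congr 1
    rw [hα_def, hc_def]
    field_simp
  have hvolume : (1 + 2 * γ * a / S) ^ (n / 2) ≤ rexp (γ * a * n) := by
    calc (1 + 2 * γ * a / S) ^ (n / 2) ≤ (1 + 2 * γ * a) ^ (n / 2) := by
          gcongr; exact div_le_self (by positivity) hS1
      _ ≤ rexp (γ * a * n) := by
          convert one_add_rpow_le_exp_mul (x := 2 * γ * a) (r := n / 2) (by positivity)
            (by positivity) using 2
          ring
  have hexponent : C + ‖w‖ ^ 2 / (4 * α) ≤ a * S + γ * a ^ 2 := by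
    have : C + ‖w‖ ^ 2 / (4 * α) = a * S + γ * a ^ 2 - γ * a ^ 2 / (S * c) := by
      rw [hC_def, norm_smul, mul_pow, norm_eq_abs, sq_abs, div_pow, mul_pow,
        sq_sqrt (by positivity), hα_def, hc_def]
      field_simp
      linear_combination (-8 * a ^ 2 * γ - 4 * a * S) * hS2
    linarith [show 0 ≤ γ * a ^ 2 / (S * c) by positivity]
  calc (2 * π) ^ (-n / 2) *
        ∫ z : V, rexp (a * √(1 + ‖y + √(2 * γ) • z‖ ^ 2)) * rexp (-‖z‖ ^ 2 / 2)
      ≤ (2 * π) ^ (-n / 2) * (rexp C * ((π / α) ^ (n / 2) * rexp (‖w‖ ^ 2 / (4 * α)))) :=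
        mul_le_mul_of_nonneg_left hintegral (by positivity)
    _ = (1 + 2 * γ * a / S) ^ (n / 2) * rexp (C + ‖w‖ ^ 2 / (4 * α)) := by
        rw [← hnormalize, exp_add C]; ring
    _ ≤ rexp (γ * a * n) * rexp (a * S + γ * a ^ 2) := by gcongr
    _ = rexp (γ * (a ^ 2 + a * n)) * rexp (a * S) := by rw [← exp_add, ← exp_add]; ring_nf

end Gaussian

lemma sqrt_one_add_sq_norm_le_of_norm_sub_le {E : Type*} [SeminormedAddCommGroup E] {x y : E}
    {δ : ℝ} (h : ‖y - x‖ ≤ δ) :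
    √(1 + ‖y‖ ^ 2) ≤ √(1 + ‖x‖ ^ 2) + ‖x‖ * δ + δ ^ 2 / 2 := by
  have hδ : 0 ≤ δ := (norm_nonneg _).trans h
  have hy : ‖y‖ ≤ ‖x‖ + δ := by linarith [norm_le_norm_add_norm_sub' y x]
  have hA : 1 ≤ √(1 + ‖x‖ ^ 2) := one_le_sqrt.mpr (le_add_of_nonneg_right (by positivity))
  have hA2 : √(1 + ‖x‖ ^ 2) ^ 2 = 1 + ‖x‖ ^ 2 := sq_sqrt (by positivity)
  have he : 0 ≤ ‖x‖ * δ + δ ^ 2 / 2 := by positivity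
  rw [add_assoc, sqrt_le_iff]
  refine ⟨by positivity, ?_⟩
  nlinarith [pow_le_pow_left₀ (norm_nonneg y) hy 2, mul_le_mul_of_nonneg_right hA he]

theorem euler_kernel_lyapunov_bound_inside_general
    (d : ℕ) (γ a M K : ℝ) (hγ : 0 < γ) (ha : 0 < a)
    (h : EuclideanSpace ℝ (Fin d) → EuclideanSpace ℝ (Fin d))
    (hbound : ∀ x : EuclideanSpace ℝ (Fin d), ‖x‖ ≤ M → ‖h x‖ ≤ K) :
    ∀ x : EuclideanSpace ℝ (Fin d), ‖x‖ ≤ M →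
      (2 * Real.pi) ^ (-(d : ℝ) / 2) *
          ∫ z : EuclideanSpace ℝ (Fin d),
            Real.exp (a * Real.sqrt (1 + ‖x - γ • h x + Real.sqrt (2 * γ) • z‖ ^ 2)) *
              Real.exp (-‖z‖ ^ 2 / 2)
        ≤ Real.exp (γ * (a ^ 2 + a * (M * K + γ * K ^ 2 / 2 + d))) *
            Real.exp (a * Real.sqrt (1 + ‖x‖ ^ 2)) := by
  intro x hx
  have hK : 0 ≤ K := (norm_nonneg _).trans (hbound x hx)
  have hdrift : ‖x - γ • h x - x‖ ≤ γ * K := by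
    rw [sub_sub_cancel_left, norm_neg, norm_smul, norm_of_nonneg hγ.le]
    exact mul_le_mul_of_nonneg_left (hbound x hx) hγ.le
  have hstep := gaussian_smoothing_exp_sqrt_le hγ.le ha.le (x - γ • h x)
  rw [finrank_euclideanSpace_fin] at hstep
  refine hstep.trans ?_
  rw [← exp_add, ← exp_add, exp_le_exp]
  have hV := mul_le_mul_of_nonneg_left (sqrt_one_add_sq_norm_le_of_norm_sub_le hdrift) ha.le
  have hx' := mul_le_mul_of_nonneg_left hx (by positivity : 0 ≤ a * γ * K)
  linarith

/-- On the ball of radius M where the drift is bounded by K, the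
Euler kernel satisfies R_γ V_a(x) ≤ e^{γc} V_a(x) with
c = a² + a(MK + γK²/2 + d). -/
theorem euler_kernel_lyapunov_bound_inside
    (d : ℕ) (hd : 1 ≤ d) (γ a M K : ℝ) (hγ : 0 < γ) (ha : 0 < a)
    (hM : 0 ≤ M) (hK : 0 ≤ K)
    (h : EuclideanSpace ℝ (Fin d) → EuclideanSpace ℝ (Fin d))
    (hmeas : Measurable h)
    (hbound : ∀ x : EuclideanSpace ℝ (Fin d), ‖x‖ ≤ M → ‖h x‖ ≤ K) :
    ∀ x : EuclideanSpace ℝ (Fin d), ‖x‖ ≤ M →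
      (2 * Real.pi) ^ (-(d : ℝ) / 2) *
          ∫ z : EuclideanSpace ℝ (Fin d),
            Real.exp (a * Real.sqrt (1 + ‖x - γ • h x + Real.sqrt (2 * γ) • z‖ ^ 2)) *
              Real.exp (-‖z‖ ^ 2 / 2)
        ≤ Real.exp (γ * (a ^ 2 + a * (M * K + γ * K ^ 2 / 2 + d))) *
            Real.exp (a * Real.sqrt (1 + ‖x‖ ^ 2)) :=
  euler_kernel_lyapunov_bound_inside_general d γ a M K hγ ha h hbound
end
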